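/- Let n ≥ 3, ν ∈ (0,1), and 1 ≤ t < 2. Let (X,d) be the star metric on the n-point set X = {r, v_1, …, v_{n−1}}, where d(r,v_i) = 1 for all i and d(v_i,v_j) = 2 for all i ≠ j. Then every oblivious ν-reliable t-spanner of (X,d) has at least (n−1)(n−2)/2 edges. -/

import Mathlib

/-!
Attack the centre `r`. Since `E|B⁺| ≤ 1 + ν < 2`, some graph of the distribution has `B⁺ = {r}`,
so it joins every two leaves by a walk avoiding `r` of weight at most `2t < 4`. Every edge between
leaves weighs at least `2`, so that walk is a single edge: the `n - 1` leaves span a clique.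
-/

open scoped BigOperators

/-- `l` is a walk from `x` to `y` w.r.t. the adjacency relation `Adj`, all of
whose vertices lie in `S`. -/
def IsWalkIn {X : Type*} (Adj : X → X → Prop) (S : Set X) (l : List X) (x y : X) : Prop :=
  l.Chain' Adj ∧ l.head? = some x ∧ l.getLast? = some y ∧ ∀ z ∈ l, z ∈ S

/-- The total weight of the walk `l` w.r.t. the edge-weight function `w`. -/
def walkWeight {X : Type*} (w : X → X → ℝ) (l : List X) : ℝ :=
  ((l.zip l.tail).map fun p => w p.1 p.2).sum

/-- An oblivious `ν`-reliable `t`-spanner of `(X, dist)` with at most `m`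
edges: a (finitely supported) probability distribution over weighted graphs on
`X` (weights dominating `dist`), each with at most `m` edges, such that for
every attack set `B ⊆ X` there are faulty extensions `Bp ω ⊇ B` with
`E[|Bp|] ≤ (1+ν)·|B|`, and for every `x,y ∉ Bp ω` there is a walk from `x` to
`y` in the graph avoiding `B` of total weight at most `t·dist x y`. -/
def IsObliviousReliableSpanner (X : Type*) [MetricSpace X] (ν t m : ℝ) : Prop :=
  ∃ (N : ℕ) (p : Fin N → ℝ) (G : Fin N → SimpleGraph X) (w : Fin N → X → X → ℝ),
    (∀ ω, 0 ≤ p ω) ∧ (∑ ω, p ω = 1) ∧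
    (∀ (ω : Fin N) (x y : X), w ω x y = w ω y x) ∧
    (∀ (ω : Fin N) (x y : X), (G ω).Adj x y → dist x y ≤ w ω x y) ∧
    (∀ ω : Fin N, ((G ω).edgeSet.ncard : ℝ) ≤ m) ∧
    ∀ B : Set X, ∃ Bp : Fin N → Set X,
      (∀ ω, B ⊆ Bp ω) ∧
      (∀ (ω : Fin N) (x y : X), x ∉ Bp ω → y ∉ Bp ω →
        ∃ l : List X, IsWalkIn (G ω).Adj Bᶜ l x y ∧
          walkWeight (w ω) l ≤ t * dist x y) ∧
      (∑ ω, p ω * ((Bp ω).ncard : ℝ)) ≤ (1 + ν) * (B.ncard : ℝ)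

section Walks

variable {X : Type*} {Adj : X → X → Prop} {S : Set X} {w : X → X → ℝ} {c : ℝ}

theorem walkWeight_cons_cons (w : X → X → ℝ) (a b : X) (l : List X) :
    walkWeight w (a :: b :: l) = w a b + walkWeight w (b :: l) := by
  simp [walkWeight]

theorem mul_length_tail_le_walkWeight
    (hw : ∀ a b, Adj a b → a ∈ S → b ∈ S → c ≤ w a b) :
    ∀ {l : List X}, l.IsChain Adj → (∀ z ∈ l, z ∈ S) → c * l.tail.length ≤ walkWeight w l
  | [], _, _ => by simp [walkWeight]
  | [_], _, _ => by simp [walkWeight]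
  | a :: b :: l, hchain, hmem => by
    rw [List.isChain_cons_cons] at hchain
    have hab := hw a b hchain.1 (hmem a (by simp)) (hmem b (by simp))
    have ih := mul_length_tail_le_walkWeight hw hchain.2
      (fun z hz => hmem z (List.mem_cons_of_mem a hz))
    simp only [List.tail_cons, List.length_cons, Nat.cast_add, Nat.cast_one] at ih ⊢
    rw [walkWeight_cons_cons]
    linarith

theorem IsWalkIn.adj_of_walkWeight_lt (hc : 0 ≤ c)
    (hw : ∀ a b, Adj a b → a ∈ S → b ∈ S → c ≤ w a b) {l : List X} {x y : X}
    (hl : IsWalkIn Adj S l x y) (hxy : x ≠ y) (hlt : walkWeight w l < 2 * c) : Adj x y := by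
  obtain ⟨hchain, hhead, hlast, hmem⟩ := hl
  match l, hchain, hhead, hlast with
  | [a], _, hhead, hlast =>
    simp only [List.head?_cons, List.getLast?_singleton, Option.some.injEq] at hhead hlast
    exact absurd (hhead.symm.trans hlast) hxy
  | [a, b], hchain, hhead, hlast =>
    simp only [List.head?_cons, List.getLast?_cons_cons, List.getLast?_singleton,
      Option.some.injEq] at hhead hlast
    exact hhead ▸ hlast ▸ (List.isChain_cons_cons.mp hchain).1
  | a :: b :: d :: l, hchain, _, _ =>
    have hlong := mul_length_tail_le_walkWeight hw hchain hmem
    simp only [List.tail_cons, List.length_cons, Nat.cast_add, Nat.cast_one] at hlong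
    nlinarith [(l.length.cast_nonneg : (0 : ℝ) ≤ l.length)]

end Walks

theorem exists_pos_lt_of_sum_mul_lt {ι : Type*} (s : Finset ι) {p f : ι → ℝ} {a : ℝ}
    (hp0 : ∀ i ∈ s, 0 ≤ p i) (hp1 : ∑ i ∈ s, p i = 1) (h : ∑ i ∈ s, p i * f i < a) :
    ∃ i ∈ s, 0 < p i ∧ f i < a := by
  have : ∑ i ∈ s, p i * f i < ∑ i ∈ s, p i * a := by rwa [← Finset.sum_mul, hp1, one_mul]
  obtain ⟨i, hi, hlt⟩ := Finset.exists_lt_of_sum_lt this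
  have hpi : 0 < p i := (hp0 i hi).lt_of_ne fun h => by simp [← h] at hlt
  exact ⟨i, hi, hpi, lt_of_mul_lt_mul_left hlt hpi.le⟩

theorem SimpleGraph.choose_two_le_ncard_edgeSet_of_isClique {V : Type*} [Finite V]
    {G : SimpleGraph V} {s : Set V} (hs : G.IsClique s) :
    s.ncard.choose 2 ≤ G.edgeSet.ncard := by
  classical
  have := Fintype.ofFinite V
  have hle : (⊤ : SimpleGraph s).map (Function.Embedding.subtype _) ≤ G := by
    intro u v huv
    obtain ⟨x, y, hxy, rfl, rfl⟩ := (SimpleGraph.map_adj _ _ _ _).mp huv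
    exact hs x.2 y.2 (Subtype.coe_ne_coe.mpr hxy)
  calc s.ncard.choose 2
      = (⊤ : SimpleGraph s).edgeFinset.card := by
        rw [SimpleGraph.card_edgeFinset_top_eq_card_choose_two, ← Nat.card_eq_fintype_card,
          Nat.card_coe_set_eq]
    _ = ((⊤ : SimpleGraph s).map (Function.Embedding.subtype _)).edgeFinset.card :=
        (SimpleGraph.card_edgeFinset_map _ _).symm
    _ ≤ G.edgeSet.ncard := by
        rw [← Set.ncard_coe_finset, SimpleGraph.coe_edgeFinset]
        exact Set.ncard_le_ncard (SimpleGraph.edgeSet_mono hle)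

theorem IsObliviousReliableSpanner.exists_spanner_of_compl_singleton {X : Type*} [MetricSpace X]
    [Finite X] {ν t m : ℝ} (h : IsObliviousReliableSpanner X ν t m) (hν : ν < 1) (r : X) :
    ∃ (G : SimpleGraph X) (w : X → X → ℝ), (∀ x y, G.Adj x y → dist x y ≤ w x y) ∧
      (G.edgeSet.ncard : ℝ) ≤ m ∧
      ∀ x y, x ≠ r → y ≠ r → ∃ l, IsWalkIn G.Adj {r}ᶜ l x y ∧ walkWeight w l ≤ t * dist x y := by
  obtain ⟨N, p, G, w, hp0, hp1, -, hwd, hm, hB⟩ := h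
  obtain ⟨Bp, hBsub, hwalk, hE⟩ := hB {r}
  rw [Set.ncard_singleton, Nat.cast_one, mul_one] at hE
  obtain ⟨ω, -, -, hlt⟩ := exists_pos_lt_of_sum_mul_lt Finset.univ (fun ω _ => hp0 ω) hp1
    (show ∑ ω, p ω * ((Bp ω).ncard : ℝ) < 2 by linarith)
  have hle : (Bp ω).ncard ≤ ({r} : Set X).ncard := by
    rw [Set.ncard_singleton]
    exact Nat.lt_succ_iff.mp (by exact_mod_cast hlt)
  have hBp : Bp ω = {r} := (Set.eq_of_subset_of_ncard_le (hBsub ω) hle).symm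
  refine ⟨G ω, w ω, hwd ω, hm ω, fun x y hx hy => hwalk ω x y ?_ ?_⟩ <;> simpa [hBp]

theorem star_metric_spanner_lower_bound_general
    (n : ℕ)
    (X : Type) [MetricSpace X] [Fintype X] (hcard : Fintype.card X = n)
    (r : X)
    (hstar2 : ∀ x y : X, x ≠ y → x ≠ r → y ≠ r → dist x y = 2)
    (ν t : ℝ) (hν1 : ν < 1) (ht2 : t < 2)
    (m : ℝ) (hspanner : IsObliviousReliableSpanner X ν t m) :
    ((n : ℝ) - 1) * ((n : ℝ) - 2) / 2 ≤ m := by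
  obtain ⟨G, w, hwd, hm, hwalk⟩ := hspanner.exists_spanner_of_compl_singleton hν1 r
  have hclique : G.IsClique ({r}ᶜ : Set X) := by
    intro x hx y hy hxy
    obtain ⟨l, hl, hlw⟩ := hwalk x y hx hy
    refine hl.adj_of_walkWeight_lt (w := w) zero_le_two (fun a b hab ha hb => ?_) hxy ?_
    · exact hstar2 a b (G.ne_of_adj hab) ha hb ▸ hwd a b hab
    · rw [hstar2 x y hxy hx hy] at hlw
      linarith
  have hleaves : ({r}ᶜ : Set X).ncard + 1 = n := by
    rw [← Set.ncard_singleton r, Set.ncard_compl_add_ncard, Nat.card_eq_fintype_card, hcard]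
  have hedges := SimpleGraph.choose_two_le_ncard_edgeSet_of_isClique hclique
  have hcast : ((n : ℝ) - 1) * ((n : ℝ) - 2) / 2 = (({r}ᶜ : Set X).ncard.choose 2 : ℕ) := by
    rw [Nat.cast_choose_two, ← hleaves]
    push_cast
    ring
  rw [hcast]
  exact le_trans (by exact_mod_cast hedges) hm

/-- Let `(X,d)` be the star metric on `n ≥ 3` points: a center `r` with
`d(r,v) = 1` for every other point `v`, and `d(u,v) = 2` for distinct points
`u,v ≠ r`. Then every oblivious `ν`-reliable `t`-spanner of `(X,d)` with
`1 ≤ t < 2` and `ν ∈ (0,1)` has at least `(n-1)(n-2)/2` edges. -/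
theorem star_metric_spanner_lower_bound
    (n : ℕ) (hn : 3 ≤ n)
    (X : Type) [MetricSpace X] [Fintype X] (hcard : Fintype.card X = n)
    (r : X)
    (hstar1 : ∀ x : X, x ≠ r → dist r x = 1)
    (hstar2 : ∀ x y : X, x ≠ y → x ≠ r → y ≠ r → dist x y = 2)
    (ν t : ℝ) (hν0 : 0 < ν) (hν1 : ν < 1) (ht1 : 1 ≤ t) (ht2 : t < 2)
    (m : ℝ) (hspanner : IsObliviousReliableSpanner X ν t m) :
    ((n : ℝ) - 1) * ((n : ℝ) - 2) / 2 ≤ m :=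
  star_metric_spanner_lower_bound_general n X hcard r hstar2 ν t hν1 ht2 m hspanner
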